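/- For all integers 0 ≤ ℓ ≤ m ≤ n, β*_{1,n}(P_{(ℓ, m−ℓ)}) ≤ 1/m^m. -/
import Mathlib


open Finset
open scoped Classical

/-- A (bounded, nonnegative) measure on the edges of the complete graph `K_n`,
given by a symmetric nonnegative weight function vanishing on the diagonal. -/
structure EdgeMeasure (n : ℕ) where
  w : Fin n → Fin n → ℝ
  symm : ∀ i j, w i j = w j i
  diag : ∀ i, w i i = 0
  nonneg : ∀ i j, 0 ≤ w i j

/-- Total mass of an edge measure (each unordered edge counted once). -/
noncomputable def mass {n : ℕ} (μ : EdgeMeasure n) : ℝ :=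
  (∑ i, ∑ j, μ.w i j) / 2

/-- Weighted degree `μ̄(v)` of a vertex. -/
noncomputable def mubar {n : ℕ} (μ : EdgeMeasure n) (v : Fin n) : ℝ :=
  ∑ u, μ.w v u

/-- The μ-weight of the path traced by a tuple of `m` vertices:
the product of the weights of its `m-1` consecutive edges. -/
noncomputable def pathWt {n m : ℕ} (μ : EdgeMeasure n) (x : Fin m → Fin n) : ℝ :=
  ∏ i : Fin (m - 1),
    μ.w (x ⟨i.1, by have := i.2; omega⟩) (x ⟨i.1 + 1, by have := i.2; omega⟩)

/-- `β(μ; P_m)`: total μ-weight of the (unlabeled, non-induced) copies of the path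
on `m` vertices in `K_n`; each unlabeled copy corresponds to exactly two injective
labeled tuples, whence the division by 2. -/
noncomputable def betaP {n : ℕ} (μ : EdgeMeasure n) (m : ℕ) : ℝ :=
  (∑ x ∈ univ.filter (fun x : Fin m → Fin n => Function.Injective x), pathWt μ x) / 2

/-- `β(P_m)`: the supremum of `β(μ; P_m)` over all `n` and all probability
measures `μ` on the edges of `K_n`. -/
noncomputable def betaPathSup (m : ℕ) : ℝ :=
  sSup {r : ℝ | ∃ n : ℕ, ∃ μ : EdgeMeasure n, mass μ = 1 ∧ r = betaP μ m}

/-- `β*(μ; P_{(s,t)})` with the path of length `s` starting at vertex `vs` and the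
path of length `t` starting at vertex `vt`: each copy of the disjoint union
`P_{s+1} ⊔ P_{t+1}` is recorded by a jointly injective pair of tuples. -/
noncomputable def betaStar {n : ℕ} (μ : EdgeMeasure n) (s t : ℕ) (vs vt : Fin n) : ℝ :=
  ∑ p ∈ univ.filter
      (fun p : (Fin (s + 1) → Fin n) × (Fin (t + 1) → Fin n) =>
        Function.Injective (Sum.elim p.1 p.2) ∧ p.1 0 = vs ∧ p.2 0 = vt),
    pathWt μ p.1 * pathWt μ p.2

/-- `β*_{w,n}(P_{(s,t)})`: the supremum of `β*(μ; P_{(s,t)})` over all measures of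
total mass `w` on the edges of `K_n`, the length-`s` path starting at vertex `n`
(index `n-1`) and the length-`t` path starting at vertex `1` (index `0`). -/
noncomputable def betaStarSupN (w : ℝ) (n s t : ℕ) : ℝ :=
  sSup {r : ℝ | ∃ μ : EdgeMeasure n, mass μ = w ∧
    ∃ h : 0 < n, r = betaStar μ s t ⟨n - 1, by omega⟩ ⟨0, h⟩}

/-- `ρ(μ; m) = ∑_{x ∈ (n)_m} μ̄(x_1) (∏ μ(x_i,x_{i+1})) μ̄(x_m)`, the sum over
ordered tuples of `m` distinct vertices. -/
noncomputable def rho {n : ℕ} (μ : EdgeMeasure n) (m : ℕ) : ℝ :=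
  if h : 0 < m then
    ∑ x ∈ univ.filter (fun x : Fin m → Fin n => Function.Injective x),
      mubar μ (x ⟨0, h⟩) * pathWt μ x * mubar μ (x ⟨m - 1, by omega⟩)
  else 0

/-- `ρ_n(m)`: supremum of `ρ(μ; m)` over probability measures on the edges of `K_n`. -/
noncomputable def rhoN (n m : ℕ) : ℝ :=
  sSup {r : ℝ | ∃ μ : EdgeMeasure n, mass μ = 1 ∧ r = rho μ m}

/-- `ρ(m) = sup_n ρ_n(m)`. -/
noncomputable def rhoSup (m : ℕ) : ℝ :=
  sSup {r : ℝ | ∃ n : ℕ, r = rhoN n m}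

/-- `μ` is the uniform probability measure on the edges of the cycle `C_m` on the
vertices `0, 1, …, m-1` of `K_n`: each cycle edge gets weight `1/m`. -/
def CycleUniform {n : ℕ} (μ : EdgeMeasure n) (m : ℕ) : Prop :=
  ∀ a b : Fin n, μ.w a b =
    (if a.1 < m ∧ b.1 < m ∧ b.1 = (a.1 + 1) % m then (1 : ℝ) / m else 0) +
    (if a.1 < m ∧ b.1 < m ∧ a.1 = (b.1 + 1) % m then (1 : ℝ) / m else 0)

/-- `deg_P(v)`: the number of edges of the path traced by the tuple `p` that are
incident to the vertex `v`. -/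
noncomputable def degTuple {n m : ℕ} (p : Fin m → Fin n) (v : Fin n) : ℕ :=
  ((univ : Finset (Fin (m - 1))).filter (fun i =>
      p ⟨i.1, by have := i.2; omega⟩ = v ∨ p ⟨i.1 + 1, by have := i.2; omega⟩ = v)).card

-- helpers
lemma pathWt_nonneg {n m : ℕ} (μ : EdgeMeasure n) (x : Fin m → Fin n) : 0 ≤ pathWt μ x :=
  Finset.prod_nonneg fun _ _ => μ.nonneg _ _

lemma mass_nonneg {n : ℕ} (μ : EdgeMeasure n) : 0 ≤ mass μ := by
  unfold mass
  apply div_nonneg _ (by norm_num)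
  exact Finset.sum_nonneg fun _ _ => Finset.sum_nonneg fun _ _ => μ.nonneg _ _

lemma betaStar_nonneg {n : ℕ} (μ : EdgeMeasure n) (s t : ℕ) (a b : Fin n) :
    0 ≤ betaStar μ s t a b :=
  Finset.sum_nonneg fun _ _ => mul_nonneg (pathWt_nonneg _ _) (pathWt_nonneg _ _)

lemma pathWt_one {n : ℕ} (μ : EdgeMeasure n) (x : Fin 1 → Fin n) : pathWt μ x = 1 := by
  unfold pathWt
  apply Finset.prod_eq_one
  intro i _
  exact (Nat.not_lt_zero _ i.isLt).elim

lemma betaStar_swap {n : ℕ} (μ : EdgeMeasure n) (s t : ℕ) (a b : Fin n) :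
    betaStar μ s t a b = betaStar μ t s b a := by
  unfold betaStar
  refine Finset.sum_nbij' (fun p => (p.2, p.1)) (fun p => (p.2, p.1)) ?_ ?_ ?_ ?_ ?_
  · intro p hp
    simp only [mem_filter, mem_univ, true_and] at hp ⊢
    refine ⟨?_, hp.2.2, hp.2.1⟩
    have : Sum.elim p.2 p.1 = (Sum.elim p.1 p.2) ∘ Sum.swap := by
      funext u; cases u <;> rfl
    rw [this]
    exact hp.1.comp fun u v h => by simpa using congrArg Sum.swap h
  · intro p hp
    simp only [mem_filter, mem_univ, true_and] at hp ⊢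
    refine ⟨?_, hp.2.2, hp.2.1⟩
    have : Sum.elim p.2 p.1 = (Sum.elim p.1 p.2) ∘ Sum.swap := by
      funext u; cases u <;> rfl
    rw [this]
    exact hp.1.comp fun u v h => by simpa using congrArg Sum.swap h
  · intro p _; rfl
  · intro p _; rfl
  · intro p _; exact mul_comm _ _

/-- The measure `μ` with all edges at `b` deleted. -/
noncomputable def zeroAt {n : ℕ} (μ : EdgeMeasure n) (b : Fin n) : EdgeMeasure n where
  w i j := if i = b ∨ j = b then 0 else μ.w i j
  symm i j := by by_cases h : i = b ∨ j = b <;> simp [h, or_comm, μ.symm i j] <;> tauto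
  diag i := by by_cases h : i = b <;> simp [h, μ.diag]
  nonneg i j := by by_cases h : i = b ∨ j = b <;> simp [h, μ.nonneg]

lemma mubar_nonneg {n : ℕ} (μ : EdgeMeasure n) (b : Fin n) : 0 ≤ mubar μ b :=
  Finset.sum_nonneg fun _ _ => μ.nonneg _ _

lemma sum_if_zero {n : ℕ} (b : Fin n) (f : Fin n → ℝ) :
    (∑ j, (if j = b then (0:ℝ) else f j)) = (∑ j, f j) - f b := by
  have h1 : (∑ j, f j) = ∑ j ∈ univ \ {b}, f j + f b :=
    Finset.sum_eq_sum_sdiff_singleton_add (mem_univ b) f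
  have h2 : (∑ j, (if j = b then (0:ℝ) else f j))
      = ∑ j ∈ univ \ {b}, (if j = b then (0:ℝ) else f j) + (if b = b then (0:ℝ) else f b) :=
    Finset.sum_eq_sum_sdiff_singleton_add (mem_univ b) _
  rw [h2, if_pos rfl, add_zero, h1]
  simp only [add_sub_cancel_right]
  refine Finset.sum_congr rfl fun j hj => ?_
  rw [if_neg]
  simp only [Finset.mem_sdiff, Finset.mem_singleton] at hj
  exact hj.2

lemma mass_zeroAt {n : ℕ} (μ : EdgeMeasure n) (b : Fin n) :
    mass (zeroAt μ b) = mass μ - mubar μ b := by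
  have hrow : ∀ i : Fin n, (∑ j, (zeroAt μ b).w i j)
      = (if i = b then (0:ℝ) else (∑ j, μ.w i j) - μ.w i b) := by
    intro i
    by_cases hi : i = b
    · simp [zeroAt, hi]
    · rw [if_neg hi, ← sum_if_zero b (fun j => μ.w i j)]
      refine Finset.sum_congr rfl fun j _ => ?_
      simp [zeroAt, hi]
  have hS : (∑ i, ∑ j, (zeroAt μ b).w i j)
      = (∑ i, ∑ j, μ.w i j) - 2 * mubar μ b := by
    calc (∑ i, ∑ j, (zeroAt μ b).w i j)
        = ∑ i, (if i = b then (0:ℝ) else (∑ j, μ.w i j) - μ.w i b) :=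
          Finset.sum_congr rfl fun i _ => hrow i
      _ = (∑ i, ((∑ j, μ.w i j) - μ.w i b)) - ((∑ j, μ.w b j) - μ.w b b) :=
          sum_if_zero b _
      _ = (∑ i, ∑ j, μ.w i j) - (∑ i, μ.w i b) - ((∑ j, μ.w b j) - μ.w b b) := by
          rw [Finset.sum_sub_distrib]
      _ = (∑ i, ∑ j, μ.w i j) - 2 * mubar μ b := by
          have h1 : (∑ i, μ.w i b) = mubar μ b := by
            unfold mubar; exact Finset.sum_congr rfl fun i _ => μ.symm i b
          have h2 : (∑ j, μ.w b j) = mubar μ b := rfl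
          rw [h1, h2, μ.diag]; ring
  unfold mass
  rw [hS]; ring

lemma amgm (k : ℕ) (M d : ℝ) (hd : 0 ≤ d) (hMd : 0 ≤ M - d) :
    d * ((M - d) ^ k / (k : ℝ) ^ k) ≤ M ^ (k + 1) / ((k : ℝ) + 1) ^ (k + 1) := by
  rcases Nat.eq_zero_or_pos k with rfl | hk
  · simpa using by linarith
  have hk0 : (0:ℝ) < (k:ℝ) := by exact_mod_cast hk
  have hk1 : (0:ℝ) < (k:ℝ) + 1 := by linarith
  set p₁ : ℝ := ((k:ℝ) + 1) * d with hp₁def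
  set p₂ : ℝ := ((k:ℝ) + 1) * (M - d) / k with hp₂def
  have hp₁ : 0 ≤ p₁ := by positivity
  have hp₂ : 0 ≤ p₂ := by positivity
  have hw : 1 / ((k:ℝ) + 1) + (k:ℝ) / ((k:ℝ) + 1) = 1 := by field_simp; ring
  have hgm := Real.geom_mean_le_arith_mean2_weighted
    (by positivity) (by positivity) hp₁ hp₂ hw
  have harith : 1 / ((k:ℝ) + 1) * p₁ + (k:ℝ) / ((k:ℝ) + 1) * p₂ = M := by
    rw [hp₁def, hp₂def]
    field_simp
    ring
  rw [harith] at hgm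
  have hM : 0 ≤ M := by linarith
  have hpow := pow_le_pow_left₀ (by positivity) hgm (k + 1)
  have hlhs : (p₁ ^ (1 / ((k:ℝ) + 1)) * p₂ ^ ((k:ℝ) / ((k:ℝ) + 1))) ^ (k + 1)
      = p₁ * p₂ ^ k := by
    rw [mul_pow, ← Real.rpow_natCast (p₁ ^ (1 / ((k:ℝ) + 1))) (k+1),
      ← Real.rpow_natCast (p₂ ^ ((k:ℝ) / ((k:ℝ) + 1))) (k+1),
      ← Real.rpow_mul hp₁, ← Real.rpow_mul hp₂]
    push_cast
    rw [show 1 / ((k:ℝ) + 1) * ((k:ℝ) + 1) = 1 by field_simp,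
      show (k:ℝ) / ((k:ℝ) + 1) * ((k:ℝ) + 1) = (k:ℝ) by field_simp,
      Real.rpow_one, Real.rpow_natCast]
  rw [hlhs] at hpow
  have hexp : p₁ * p₂ ^ k = d * ((M - d) ^ k / (k:ℝ) ^ k) * ((k:ℝ) + 1) ^ (k + 1) := by
    rw [hp₁def, hp₂def, div_pow, mul_pow]
    field_simp
    ring
  rw [hexp] at hpow
  rw [le_div_iff₀ (by positivity : (0:ℝ) < ((k:ℝ) + 1) ^ (k + 1))]
  exact hpow

/-- The tail of a tuple. -/
noncomputable def tl {n t : ℕ} (p : Fin (t + 2) → Fin n) : Fin (t + 1) → Fin n :=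
  fun i => p ⟨i.1 + 1, by omega⟩

lemma pathWt_succ {n t : ℕ} (μ : EdgeMeasure n) (p : Fin (t + 2) → Fin n) :
    pathWt μ p = μ.w (p 0) (p ⟨1, by omega⟩) * pathWt μ (tl p) := by
  rw [show pathWt μ p = ∏ i : Fin (t + 1),
      μ.w (p ⟨i.1, by omega⟩) (p ⟨i.1 + 1, by omega⟩) from rfl,
    Fin.prod_univ_succ]
  congr 1

lemma pathWt_zeroAt {n m : ℕ} (μ : EdgeMeasure n) (b : Fin n) (x : Fin m → Fin n)
    (hx : ∀ i, x i ≠ b) : pathWt (zeroAt μ b) x = pathWt μ x := by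
  unfold pathWt
  refine Finset.prod_congr rfl fun i _ => ?_
  show (if _ ∨ _ then (0:ℝ) else _) = _
  rw [if_neg]
  push_neg
  exact ⟨hx _, hx _⟩

lemma peel_step {n : ℕ} (s t : ℕ) (μ : EdgeMeasure n) (a b : Fin n) :
    betaStar μ s (t + 1) a b ≤ ∑ x : Fin n, μ.w b x * betaStar (zeroAt μ b) s t a x := by
  classical
  set μ' := zeroAt μ b with hμ'
  set H : Fin n × ((Fin (s + 1) → Fin n) × (Fin (t + 1) → Fin n)) → ℝ :=
    fun y => μ.w b y.1 *
      (if (Function.Injective (Sum.elim y.2.1 y.2.2) ∧ y.2.1 0 = a ∧ y.2.2 0 = y.1)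
        then pathWt μ' y.2.1 * pathWt μ' y.2.2 else 0) with hH
  have hHnonneg : ∀ y, 0 ≤ H y := by
    intro y
    apply mul_nonneg (μ.nonneg _ _)
    split
    · exact mul_nonneg (pathWt_nonneg _ _) (pathWt_nonneg _ _)
    · exact le_refl 0
  have hRHS : (∑ x : Fin n, μ.w b x * betaStar μ' s t a x) = ∑ y : Fin n × _, H y := by
    rw [Fintype.sum_prod_type]
    refine Finset.sum_congr rfl fun x _ => ?_
    rw [hH]
    simp only
    rw [← Finset.mul_sum]
    congr 1
    unfold betaStar
    rw [Finset.sum_filter]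
  rw [hRHS]
  set B := univ.filter
      (fun p : (Fin (s + 1) → Fin n) × (Fin (t + 1 + 1) → Fin n) =>
        Function.Injective (Sum.elim p.1 p.2) ∧ p.1 0 = a ∧ p.2 0 = b) with hB
  set φ : ((Fin (s + 1) → Fin n) × (Fin (t + 1 + 1) → Fin n)) →
      Fin n × ((Fin (s + 1) → Fin n) × (Fin (t + 1) → Fin n)) :=
    fun p => (p.2 ⟨1, by omega⟩, (p.1, tl p.2)) with hφ
  have hterm : ∀ p ∈ B, pathWt μ p.1 * pathWt μ p.2 = H (φ p) := by
    rintro ⟨p1, p2⟩ hp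
    rw [hB, Finset.mem_filter] at hp
    obtain ⟨-, hpinj, hp1, hp2⟩ := hp
    simp only at hpinj hp1 hp2 ⊢
    have hb1 : ∀ i, p1 i ≠ b := by
      intro i h
      have : Sum.elim p1 p2 (Sum.inl i) = Sum.elim p1 p2 (Sum.inr 0) := by
        simp [h, hp2]
      exact absurd (hpinj this) (by simp)
    have hb2 : ∀ i, tl p2 i ≠ b := by
      intro i h
      have : Sum.elim p1 p2 (Sum.inr ⟨i.1 + 1, by omega⟩) = Sum.elim p1 p2 (Sum.inr 0) := by
        simpa [tl, hp2] using h
      have := hpinj this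
      simp only [Sum.inr.injEq] at this
      exact absurd (congrArg Fin.val this) (by simp)
    have hcondinj : Function.Injective (Sum.elim p1 (tl p2)) := by
      have hcomp : Sum.elim p1 (tl p2) =
          (Sum.elim p1 p2) ∘ (Sum.map id (fun i : Fin (t + 1) => (⟨i.1 + 1, by omega⟩ : Fin (t + 1 + 1)))) := by
        funext u; cases u <;> rfl
      rw [hcomp]
      refine hpinj.comp ?_
      intro u v huv
      cases u <;> cases v <;> simp_all [Sum.map]
      exact Fin.ext (by omega)
    have htl0 : tl p2 0 = p2 ⟨1, by omega⟩ := by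
      simp [tl]
    rw [hH]
    simp only [hφ]
    rw [if_pos ⟨hcondinj, hp1, htl0⟩]
    rw [hμ', pathWt_zeroAt μ b p1 hb1, pathWt_zeroAt μ b (tl p2) hb2,
      pathWt_succ μ p2, hp2]
    ring
  have hinj : ∀ p ∈ B, ∀ q ∈ B, φ p = φ q → p = q := by
    rintro ⟨p1, p2⟩ hp ⟨q1, q2⟩ hq hpq
    rw [hB, Finset.mem_filter] at hp hq
    obtain ⟨-, -, -, hp2⟩ := hp
    obtain ⟨-, -, -, hq2⟩ := hq
    simp only [hφ, Prod.mk.injEq] at hpq ⊢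
    obtain ⟨-, h1, htl⟩ := hpq
    refine ⟨h1, ?_⟩
    funext j
    refine Fin.cases ?_ ?_ j
    · simp only at hp2 hq2; rw [hp2, hq2]
    · intro i
      have := congrFun htl i
      simpa [tl, Fin.succ] using this
  calc betaStar μ s (t + 1) a b = ∑ p ∈ B, H (φ p) := Finset.sum_congr rfl hterm
    _ = ∑ y ∈ B.image φ, H y := (Finset.sum_image hinj).symm
    _ ≤ ∑ y : Fin n × _, H y :=
        Finset.sum_le_sum_of_subset_of_nonneg (Finset.subset_univ _)
          (fun y _ _ => hHnonneg y)

lemma betaStar_zero_le_one {n : ℕ} (μ : EdgeMeasure n) (a b : Fin n) :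
    betaStar μ 0 0 a b ≤ 1 := by
  unfold betaStar
  have h1 : ∀ p ∈ (univ.filter (fun p : (Fin (0 + 1) → Fin n) × (Fin (0 + 1) → Fin n) =>
      Function.Injective (Sum.elim p.1 p.2) ∧ p.1 0 = a ∧ p.2 0 = b)),
      pathWt μ p.1 * pathWt μ p.2 = 1 := fun p _ => by
    rw [pathWt_one, pathWt_one, mul_one]
  rw [Finset.sum_congr rfl h1, Finset.sum_const, nsmul_eq_mul, mul_one]
  rw [show (1 : ℝ) = ((1 : ℕ) : ℝ) by norm_num, Nat.cast_le]
  apply Finset.card_le_one.2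
  rintro ⟨p1, p2⟩ hp ⟨q1, q2⟩ hq
  rw [Finset.mem_filter] at hp hq
  obtain ⟨-, -, hp1, hp2⟩ := hp
  obtain ⟨-, -, hq1, hq2⟩ := hq
  simp only at hp1 hp2 hq1 hq2
  have e1 : p1 = q1 := by
    funext i
    rw [show i = 0 from Fin.ext (by omega), hp1, hq1]
  have e2 : p2 = q2 := by
    funext i
    rw [show i = 0 from Fin.ext (by omega), hp2, hq2]
  rw [e1, e2]

lemma betaStar_le (k : ℕ) : ∀ (s t : ℕ), s + t = k → ∀ {n : ℕ} (μ : EdgeMeasure n)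
    (a b : Fin n), betaStar μ s t a b ≤ (mass μ) ^ k / (k : ℝ) ^ k := by
  induction k with
  | zero =>
    rintro s t hst n μ a b
    obtain rfl : s = 0 := by omega
    obtain rfl : t = 0 := by omega
    simpa using betaStar_zero_le_one μ a b
  | succ k ih =>
    have key : ∀ {n : ℕ} (s t : ℕ), s + t = k → ∀ (μ : EdgeMeasure n) (a b : Fin n),
        betaStar μ s (t + 1) a b ≤ (mass μ) ^ (k + 1) / ((k : ℝ) + 1) ^ (k + 1) := by
      intro n s t hst μ a b
      calc betaStar μ s (t + 1) a b
          ≤ ∑ x : Fin n, μ.w b x * betaStar (zeroAt μ b) s t a x := peel_step s t μ a b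
        _ ≤ ∑ x : Fin n, μ.w b x * ((mass (zeroAt μ b)) ^ k / (k : ℝ) ^ k) :=
            Finset.sum_le_sum fun x _ =>
              mul_le_mul_of_nonneg_left (ih s t hst _ a x) (μ.nonneg b x)
        _ = mubar μ b * ((mass (zeroAt μ b)) ^ k / (k : ℝ) ^ k) := by
            rw [← Finset.sum_mul]; rfl
        _ = mubar μ b * ((mass μ - mubar μ b) ^ k / (k : ℝ) ^ k) := by rw [mass_zeroAt]
        _ ≤ (mass μ) ^ (k + 1) / ((k : ℝ) + 1) ^ (k + 1) := by
            have h0 : 0 ≤ mass μ - mubar μ b := by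
              rw [← mass_zeroAt]; exact mass_nonneg _
            exact amgm k (mass μ) (mubar μ b) (mubar_nonneg μ b) h0
    intro s t hst n μ a b
    have hcast : ((k + 1 : ℕ) : ℝ) = (k : ℝ) + 1 := by push_cast; ring
    rcases t with _ | t
    · rcases s with _ | s
      · omega
      · rw [betaStar_swap, hcast]
        exact key 0 s (by omega) μ b a
    · rw [hcast]
      exact key s t (by omega) μ a b


/-- Lemma 2.4: for all `0 ≤ ℓ ≤ m ≤ n`, `β*_{1,n}(P_{(ℓ, m-ℓ)}) ≤ 1/m^m`. -/
theorem stmt8 (l m n : ℕ) (hlm : l ≤ m) (hmn : m ≤ n) :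
    betaStarSupN 1 n l (m - l) ≤ 1 / (m : ℝ) ^ m := by
  apply Real.sSup_le
  · rintro r ⟨μ, hmass, hn, rfl⟩
    have h := betaStar_le m l (m - l) (by omega) μ
      (⟨n - 1, by omega⟩ : Fin n) (⟨0, hn⟩ : Fin n)
    rw [hmass, one_pow] at h
    exact h
  · positivity
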